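/- For any well-formed suspension environment e of the form ⟦e₁, nl₁, ol₂, e₂⟧ (a merged environment), the length satisfies len(e) = len(e₁) + (ol₂ ∸ nl₁), where ∸ denotes truncated subtraction on natural numbers, and this length is preserved by every rewrite step of the reading and merging rules. -/

import Mathlib

mutual
inductive STerm : Type
  | const : ℕ → STerm
  | var   : ℕ → STerm
  | app   : STerm → STerm → STerm
  | lam   : STerm → STerm
  | susp  : STerm → ℕ → ℕ → SEnv → STerm
inductive SEnv : Type
  | nil   : SEnv
  | cons  : STerm → ℕ → SEnv → SEnv
  | merge : SEnv → ℕ → ℕ → SEnv → SEnv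
end

/-- Length of an environment. -/
def SEnv.len : SEnv → ℕ
  | .nil => 0
  | .cons _ _ e => 1 + e.len
  | .merge e1 nl1 ol2 _ => e1.len + (ol2 - nl1)

/-- Level of an environment. -/
def SEnv.lev : SEnv → ℕ
  | .nil => 0
  | .cons _ n _ => n
  | .merge _ nl1 ol2 e2 => e2.lev + (nl1 - ol2)

mutual
/-- Well-formedness of suspension terms. -/
def STerm.wf : STerm → Prop
  | .const _ => True
  | .var _ => True
  | .app t1 t2 => t1.wf ∧ t2.wf
  | .lam t => t.wf
  | .susp t ol nl e => t.wf ∧ e.wf ∧ e.len = ol ∧ e.lev ≤ nl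
/-- Well-formedness of suspension environments. -/
def SEnv.wf : SEnv → Prop
  | .nil => True
  | .cons t n e => t.wf ∧ e.wf ∧ e.lev ≤ n
  | .merge e1 nl1 ol2 e2 => e1.wf ∧ e2.wf ∧ e2.len = ol2 ∧ e1.lev ≤ nl1
end

/-- A simple environment: no merged environments on the top spine. -/
def SEnv.simple : SEnv → Prop
  | .nil => True
  | .cons _ _ e => e.simple
  | .merge _ _ _ _ => False

mutual
/-- One step of the reading rules (r1)-(r6) and merging rules (m1)-(m6),
applied anywhere (compatible closure). -/
inductive StepT : STerm → STerm → Prop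
  | r1 : ∀ (c ol nl : ℕ) (e : SEnv), StepT (.susp (.const c) ol nl e) (.const c)
  | r2 : ∀ (i nl : ℕ), StepT (.susp (.var i) 0 nl .nil) (.var (i + nl))
  | r3 : ∀ (ol nl : ℕ) (t : STerm) (l : ℕ) (e : SEnv),
      StepT (.susp (.var 1) ol nl (.cons t l e)) (.susp t 0 (nl - l) .nil)
  | r4 : ∀ (i ol nl : ℕ) (t : STerm) (l : ℕ) (e : SEnv), 1 < i →
      StepT (.susp (.var i) ol nl (.cons t l e)) (.susp (.var (i - 1)) (ol - 1) nl e)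
  | r5 : ∀ (t1 t2 : STerm) (ol nl : ℕ) (e : SEnv),
      StepT (.susp (.app t1 t2) ol nl e) (.app (.susp t1 ol nl e) (.susp t2 ol nl e))
  | r6 : ∀ (t : STerm) (ol nl : ℕ) (e : SEnv),
      StepT (.susp (.lam t) ol nl e)
            (.lam (.susp t (ol + 1) (nl + 1) (.cons (.var 1) (nl + 1) e)))
  | m1 : ∀ (t : STerm) (ol1 nl1 : ℕ) (e1 : SEnv) (ol2 nl2 : ℕ) (e2 : SEnv),
      StepT (.susp (.susp t ol1 nl1 e1) ol2 nl2 e2)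
            (.susp t (ol1 + (ol2 - nl1)) (nl2 + (nl1 - ol2)) (.merge e1 nl1 ol2 e2))
  | appL : ∀ (t1 t1' t2 : STerm), StepT t1 t1' → StepT (.app t1 t2) (.app t1' t2)
  | appR : ∀ (t1 t2 t2' : STerm), StepT t2 t2' → StepT (.app t1 t2) (.app t1 t2')
  | lamC : ∀ (t t' : STerm), StepT t t' → StepT (.lam t) (.lam t')
  | suspT : ∀ (t t' : STerm) (ol nl : ℕ) (e : SEnv),
      StepT t t' → StepT (.susp t ol nl e) (.susp t' ol nl e)
  | suspE : ∀ (t : STerm) (ol nl : ℕ) (e e' : SEnv),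
      StepE e e' → StepT (.susp t ol nl e) (.susp t ol nl e')
inductive StepE : SEnv → SEnv → Prop
  | m2 : ∀ (e1 : SEnv) (nl1 : ℕ), StepE (.merge e1 nl1 0 .nil) e1
  | m3 : ∀ (ol2 : ℕ) (e2 : SEnv), StepE (.merge .nil 0 ol2 e2) e2
  | m4 : ∀ (nl1 ol2 : ℕ) (t : STerm) (l : ℕ) (e2 : SEnv), 1 ≤ nl1 →
      StepE (.merge .nil nl1 ol2 (.cons t l e2)) (.merge .nil (nl1 - 1) (ol2 - 1) e2)
  | m5 : ∀ (t : STerm) (n : ℕ) (e1 : SEnv) (nl1 ol2 : ℕ) (s : STerm) (l : ℕ) (e2 : SEnv),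
      n < nl1 →
      StepE (.merge (.cons t n e1) nl1 ol2 (.cons s l e2))
            (.merge (.cons t n e1) (nl1 - 1) (ol2 - 1) e2)
  | m6 : ∀ (t : STerm) (n : ℕ) (e1 : SEnv) (ol2 : ℕ) (s : STerm) (l : ℕ) (e2 : SEnv),
      StepE (.merge (.cons t n e1) n ol2 (.cons s l e2))
            (.cons (.susp t ol2 l (.cons s l e2)) (l + (n - ol2))
                   (.merge e1 n ol2 (.cons s l e2)))
  | consT : ∀ (t t' : STerm) (n : ℕ) (e : SEnv),
      StepT t t' → StepE (.cons t n e) (.cons t' n e)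
  | consE : ∀ (t : STerm) (n : ℕ) (e e' : SEnv),
      StepE e e' → StepE (.cons t n e) (.cons t n e')
  | mergeL : ∀ (e1 e1' : SEnv) (nl1 ol2 : ℕ) (e2 : SEnv),
      StepE e1 e1' → StepE (.merge e1 nl1 ol2 e2) (.merge e1' nl1 ol2 e2)
  | mergeR : ∀ (e1 : SEnv) (nl1 ol2 : ℕ) (e2 e2' : SEnv),
      StepE e2 e2' → StepE (.merge e1 nl1 ol2 e2) (.merge e1 nl1 ol2 e2')
end

theorem StepE.len_eq : ∀ {e e' : SEnv}, StepE e e' → e.wf → e'.len = e.len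
  | _, _, .m2 _ _, _ => by simp only [SEnv.len, Nat.zero_sub, Nat.add_zero]
  | _, _, .m3 _ _, ⟨_, _, hlen, _⟩ => by simp only [SEnv.len, hlen, Nat.sub_zero, Nat.zero_add]
  | _, _, .m4 _ _ _ _ _ _, _ => by simp only [SEnv.len]; omega
  | _, _, .m5 _ _ _ _ _ _ _ _ _, _ => by simp only [SEnv.len]; omega
  | _, _, .m6 _ _ _ _ _ _ _, _ => by simp only [SEnv.len]; omega
  | _, _, .consT _ _ _ _ _, _ => rfl
  | _, _, .consE _ _ _ _ h, ⟨_, hwf, _⟩ => by simp only [SEnv.len, h.len_eq hwf]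
  | _, _, .mergeL _ _ _ _ _ h, ⟨hwf, _⟩ => by simp only [SEnv.len, h.len_eq hwf]
  | _, _, .mergeR _ _ _ _ _ _, _ => rfl

/-- for a well-formed merged environment, its length is
`len e₁ + (ol₂ ∸ nl₁)`, and length is preserved by every reading/merging rewrite step. -/
theorem stmt0 (e1 e2 : SEnv) (nl1 ol2 : ℕ)
    (hwf : (SEnv.merge e1 nl1 ol2 e2).wf) :
    (SEnv.merge e1 nl1 ol2 e2).len = e1.len + (ol2 - nl1) ∧
    ∀ e' : SEnv, StepE (SEnv.merge e1 nl1 ol2 e2) e' →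
      e'.len = (SEnv.merge e1 nl1 ol2 e2).len :=
  ⟨rfl, fun _ h => h.len_eq hwf⟩
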